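/- With notation as in Lemma A.2 (i.e. $H_{\gamma,n}(X,Y) = \sum_{k=0}^{Y-1} \binom{-X}{k}\binom{\gamma+X}{n+X+k}$ for $\gamma$ in a commutative $\mathbb{Q}$-algebra, $n \in \mathbb{Z}$, $X \ge 0$, $Y \ge 1$ integers), one has the induction step $H_{\gamma,n}(X+1,Y) = H_{\gamma,n}(X,Y) + (-1)^{X+Y+1}\binom{-Y}{X}\binom{\gamma+X}{n+X+Y}$, where binomial coefficients are generalized binomial coefficients (equal to $0$ for negative bottom argument). -/
import Mathlib


/-- Generalized binomial coefficient `x(x-1)⋯(x-k+1)/k!` for `x` in a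
commutative `ℚ`-algebra. -/
noncomputable def gbinomA {R : Type*} [CommRing R] [Algebra ℚ R] (x : R) (k : ℕ) : R :=
  algebraMap ℚ R ((Nat.factorial k : ℚ)⁻¹) * ∏ i ∈ Finset.range k, (x - i)

/-- Generalized binomial coefficient with integer bottom argument, equal to `0`
for negative bottom argument. -/
noncomputable def gbinomAZ {R : Type*} [CommRing R] [Algebra ℚ R] (x : R) (k : ℤ) : R :=
  if k < 0 then 0 else gbinomA x k.toNat

section Aux
variable {R : Type*} [CommRing R] [Algebra ℚ R]

lemma gbinomA_zero (x : R) : gbinomA x 0 = 1 := by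
  simp [gbinomA]

lemma gbinomA_pascal (x : R) (k : ℕ) :
    gbinomA (x+1) (k+1) = gbinomA x (k+1) + gbinomA x k := by
  have key : (algebraMap ℚ R) (((k+1).factorial :ℚ)⁻¹) * ((k:R)+1)
      = algebraMap ℚ R ((k.factorial :ℚ)⁻¹) := by
    have h1 : ((k:R)+1) = algebraMap ℚ R ((k:ℚ)+1) := by
      simp [map_add, map_natCast]
    rw [h1, ← map_mul]
    congr 1
    rw [Nat.factorial_succ]
    push_cast
    field_simp
  unfold gbinomA
  rw [Finset.prod_range_succ', Finset.prod_range_succ]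
  have h2 : (∏ i ∈ Finset.range k, (x + 1 - ((i:ℕ)+1 : ℕ))) = ∏ i ∈ Finset.range k, (x - i) := by
    apply Finset.prod_congr rfl
    intro i _
    push_cast
    ring
  rw [h2]
  have h3 : x + 1 - ((0:ℕ):R) = x + 1 := by push_cast; ring
  rw [h3]
  rw [← key]
  ring

lemma gbinomAZ_coe (x : R) (k : ℕ) : gbinomAZ x (k : ℤ) = gbinomA x k := by
  simp [gbinomAZ]

lemma gbinomAZ_pascal (x : R) (m : ℤ) :
    gbinomAZ (x+1) m = gbinomAZ x m + gbinomAZ x (m-1) := by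
  rcases lt_trichotomy m 0 with h | h | h
  · simp [gbinomAZ, h, show m - 1 < 0 by omega]
  · subst h
    simp [gbinomAZ, show ¬ ((0:ℤ) < 0) by omega, show (0:ℤ)-1 < 0 by omega, gbinomA_zero]
  · obtain ⟨p, rfl⟩ : ∃ p:ℕ, m = (p:ℤ)+1 := ⟨(m-1).toNat, by omega⟩
    have e1 : ((p:ℤ)+1) = ((p+1 : ℕ) : ℤ) := by push_cast; ring
    have e2 : ((p:ℤ)+1-1) = ((p : ℕ) : ℤ) := by push_cast; ring
    rw [e2, e1, gbinomAZ_coe, gbinomAZ_coe, gbinomAZ_coe, gbinomA_pascal]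

lemma gbinomA_succ_q (x : ℚ) (k : ℕ) :
    gbinomA x (k+1) = ((k+1:ℚ))⁻¹ * (gbinomA x k * (x - k)) := by
  unfold gbinomA
  rw [Finset.prod_range_succ, Nat.factorial_succ]
  rw [Algebra.algebraMap_self]
  simp only [RingHom.id_apply]
  push_cast
  rw [mul_inv]
  ring

lemma gbinomA_neg_q (a b : ℕ) :
    gbinomA (-(a:ℚ)-1) b = (-1:ℚ)^b * ((a+b).choose b : ℚ) := by
  induction b with
  | zero => simp [gbinomA_zero]
  | succ k ih =>
    rw [gbinomA_succ_q, ih]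
    have hch : ((a+k+1).choose (k+1) : ℚ) * ((k:ℚ)+1) = ((a+k).choose k : ℚ) * ((a:ℚ)+(k:ℚ)+1) := by
      have h := Nat.add_one_mul_choose_eq (a+k) k
      have h2 : (((a+k).succ * (a+k).choose k : ℕ) : ℚ) = (((a+k+1).choose (k+1) * (k+1) : ℕ) : ℚ) := by
        exact_mod_cast congrArg (Nat.cast : ℕ → ℚ) h
      push_cast at h2
      linarith
    have hk : ((k:ℚ)+1) ≠ 0 := by positivity
    have hcc : (a + (k+1)) = (a + k + 1) := by omega
    rw [hcc]
    field_simp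
    push_cast
    linear_combination ((-1:ℚ)^k) * hch

lemma map_gbinomA (q : ℚ) (k : ℕ) :
    gbinomA ((algebraMap ℚ R) q) k = algebraMap ℚ R (gbinomA q k) := by
  simp only [gbinomA, map_mul, map_prod, map_sub, map_natCast]
  simp [Algebra.algebraMap_self]

lemma gbinomA_neg (a b : ℕ) :
    gbinomA (-(a:R)-1) b = (-1:R)^b * ((a+b).choose b : R) := by
  have h1 : (-(a:R)-1) = algebraMap ℚ R (-(a:ℚ)-1) := by
    simp [map_sub, map_neg, map_natCast]
  rw [h1, map_gbinomA, gbinomA_neg_q]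
  simp [map_mul, map_pow, map_natCast]

end Aux

/-- The induction step `H_{γ,n}(X+1,Y) = H_{γ,n}(X,Y) + (-1)^{X+Y+1} binom(-Y,X) binom(γ+X, n+X+Y)`
in the proof of Lemma A.2. -/
theorem stmt7 {R : Type*} [CommRing R] [Algebra ℚ R] (γ : R) (n X Y : ℤ)
    (hX : 0 ≤ X) (hY : 1 ≤ Y) :
    (∑ k ∈ Finset.range Y.toNat,
        gbinomAZ (-((X : R) + 1)) (k : ℤ) * gbinomAZ (γ + (X : R) + 1) (n + (X + 1) + k))
      = (∑ k ∈ Finset.range Y.toNat,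
          gbinomAZ (-(X : R)) (k : ℤ) * gbinomAZ (γ + (X : R)) (n + X + k))
        + (-1 : R) ^ (X.toNat + Y.toNat + 1) * gbinomAZ (-(Y : R)) X *
            gbinomAZ (γ + (X : R)) (n + X + Y) := by
  obtain ⟨Xn, rfl⟩ : ∃ m:ℕ, X = (m:ℤ) := ⟨X.toNat, (Int.toNat_of_nonneg hX).symm⟩
  obtain ⟨Yn, rfl⟩ : ∃ m:ℕ, Y = (m:ℤ) := ⟨Y.toNat, (Int.toNat_of_nonneg (by omega)).symm⟩
  obtain ⟨m, rfl⟩ : ∃ m:ℕ, Yn = m+1 := ⟨Yn-1, by omega⟩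
  simp only [Int.toNat_natCast]
  push_cast
  set F : ℤ → R := fun j => gbinomAZ (-(Xn:R)-1) j with hF
  set G : ℤ → R := fun j => gbinomAZ (γ + (Xn:R)) j with hG
  have lhs_eq : (∑ k ∈ Finset.range (m+1),
        gbinomAZ (-((Xn : R) + 1)) (k : ℤ) * gbinomAZ (γ + (Xn : R) + 1) (n + ((Xn:ℤ) + 1) + k))
      = ∑ k ∈ Finset.range (m+1),
          (F k * G (n + Xn + k) + F k * G (n + Xn + k + 1)) := by
    apply Finset.sum_congr rfl
    intro k _
    have h1 : -((Xn:R)+1) = -(Xn:R)-1 := by ring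
    have h2 : γ+(Xn:R)+1 = (γ+(Xn:R))+1 := by ring
    have h3 : n+((Xn:ℤ)+1)+k = (n+(Xn:ℤ)+k+1) := by ring
    rw [h1, h2, h3, gbinomAZ_pascal]
    have h4 : (n+(Xn:ℤ)+k+1)-1 = n+(Xn:ℤ)+k := by ring
    rw [h4, hF, hG]
    ring
  have rhs_eq : (∑ k ∈ Finset.range (m+1),
        gbinomAZ (-(Xn : R)) (k : ℤ) * gbinomAZ (γ + (Xn : R)) (n + (Xn:ℤ) + k))
      = ∑ k ∈ Finset.range (m+1),
          (F k * G (n + Xn + k) + F ((k:ℤ) - 1) * G (n + Xn + k)) := by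
    apply Finset.sum_congr rfl
    intro k _
    have h1 : -(Xn:R) = (-(Xn:R)-1)+1 := by ring
    rw [h1, gbinomAZ_pascal, hF, hG]
    ring
  rw [lhs_eq, rhs_eq, Finset.sum_add_distrib, Finset.sum_add_distrib]
  have tele : (∑ k ∈ Finset.range (m+1), F k * G (n + Xn + k + 1))
      - (∑ k ∈ Finset.range (m+1), F ((k:ℤ) - 1) * G (n + Xn + k))
      = F m * G (n + Xn + m + 1) := by
    have h := Finset.sum_range_sub (fun j : ℕ => F ((j:ℤ) - 1) * G (n + Xn + j)) (m+1)
    have congr1 : (∑ k ∈ Finset.range (m+1),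
          ((fun j : ℕ => F ((j:ℤ) - 1) * G (n + Xn + j)) (k+1)
            - (fun j : ℕ => F ((j:ℤ) - 1) * G (n + Xn + j)) k))
        = (∑ k ∈ Finset.range (m+1), F k * G (n + Xn + k + 1))
          - (∑ k ∈ Finset.range (m+1), F ((k:ℤ) - 1) * G (n + Xn + k)) := by
      rw [← Finset.sum_sub_distrib]
      apply Finset.sum_congr rfl
      intro k _
      simp only
      have e1 : ((k+1:ℕ):ℤ) - 1 = (k:ℤ) := by push_cast; ring
      have e2 : n + (Xn:ℤ) + ((k+1:ℕ):ℤ) = n + Xn + k + 1 := by push_cast; ring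
      rw [e1, e2]
    rw [congr1] at h
    rw [h]
    have e4 : F (((0:ℕ):ℤ) - 1) = 0 := by
      rw [hF]
      simp [gbinomAZ]
    rw [e4]
    have e5 : (((m+1:ℕ)):ℤ) - 1 = (m:ℤ) := by push_cast; ring
    have e6 : n + (Xn:ℤ) + ((m+1:ℕ):ℤ) = n + Xn + m + 1 := by push_cast; ring
    rw [e5, e6]
    ring
  have coeff : F m = (-1 : R) ^ (Xn + (m + 1) + 1) * gbinomAZ (-((m:R) + 1)) (Xn:ℤ) := by
    have h1 : F (m:ℤ) = gbinomA (-(Xn:R)-1) m := gbinomAZ_coe _ _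
    have h2 : gbinomAZ (-((m:R)+1)) ((Xn:ℕ):ℤ) = gbinomA (-(m:R)-1) Xn := by
      rw [gbinomAZ_coe]
      congr 1
      ring
    rw [h1, h2, gbinomA_neg, gbinomA_neg]
    have hch : (Xn+m).choose m = (m+Xn).choose Xn := by
      rw [Nat.add_comm m Xn, ← Nat.choose_symm (Nat.le_add_right Xn m)]
      congr 1
      omega
    have hs : (-1:R)^(Xn+(m+1)+1) * (-1:R)^Xn = (-1:R)^m := by
      rw [← pow_add, show Xn+(m+1)+1+Xn = 2*(Xn+1)+m by ring, pow_add, pow_mul,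
        neg_one_sq, one_pow, one_mul]
    rw [hch, ← hs]
    ring
  calc (∑ k ∈ Finset.range (m+1), F k * G (n + Xn + k))
        + (∑ k ∈ Finset.range (m+1), F k * G (n + Xn + k + 1))
      = ((∑ k ∈ Finset.range (m+1), F k * G (n + Xn + k))
          + (∑ k ∈ Finset.range (m+1), F ((k:ℤ) - 1) * G (n + Xn + k)))
        + (F m * G (n + Xn + m + 1)) := by
        rw [← tele]; ring
    _ = _ := by
        rw [coeff, hG]
        ring_nf
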